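/- Let A_0 ⊆ A_1 ⊆ … ⊆ A_{n-1} ⊆ B be a chain of fields and let T_n = A_0 + A_1X + … + A_{n-1}X^{n-1} + X^nB[X]. Then T_n is atomic: every nonzero nonunit element of T_n is a finite product of irreducible elements of T_n. -/

import Mathlib

/-!
Every nonzero constant of `T_n` lies in the field `A_0` (because `n > 0`), so it is a unit of `T_n`.
Hence in a proper factorization inside `T_n` the nonunit cofactor has positive degree: strict
divisibility strictly lowers the degree and is well founded, and in such a monoid every nonzero
nonunit is a product of irreducibles.
-/

/-- The polynomial composite `T_n = A_0 + A_1·X + … + A_{n-1}·X^{n-1} + X^n·B[X]` attached to a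
monotone chain `A : ℕ → Subring B`: the subring of `B[X]` of polynomials whose `i`-th
coefficient lies in `A i` for every `i < n`. -/
def compositeChain {B : Type*} [CommRing B] (n : ℕ) (A : ℕ → Subring B) (hA : Monotone A) :
    Subring (Polynomial B) where
  carrier := {f : Polynomial B | ∀ i < n, f.coeff i ∈ A i}
  mul_mem' {f g} hf hg := by
    intro i hi
    rw [Polynomial.coeff_mul]
    refine sum_mem fun x hx => ?_
    replace hx : x.1 + x.2 = i := by
      first
        | exact Finset.mem_antidiagonal.mp hx
        | simpa using hx
    have h1 : x.1 ≤ i := by omega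
    have h2 : x.2 ≤ i := by omega
    exact mul_mem (hA h1 (hf x.1 (lt_of_le_of_lt h1 hi)))
      (hA h2 (hg x.2 (lt_of_le_of_lt h2 hi)))
  one_mem' := by
    intro i hi
    rw [Polynomial.coeff_one]
    split
    · exact one_mem _
    · exact zero_mem _
  add_mem' {f g} hf hg := by
    intro i hi
    rw [Polynomial.coeff_add]
    exact add_mem (hf i hi) (hg i hi)
  zero_mem' := by
    intro i hi
    rw [Polynomial.coeff_zero]
    exact zero_mem _
  neg_mem' {f} hf := by
    intro i hi
    rw [Polynomial.coeff_neg]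
    exact neg_mem (hf i hi)

theorem mem_compositeChain {B : Type*} [CommRing B] (n : ℕ) (A : ℕ → Subring B)
    (hA : Monotone A) (f : Polynomial B) :
    f ∈ compositeChain n A hA ↔ ∀ i < n, f.coeff i ∈ A i := Iff.rfl

open Polynomial

theorem Subring.wfDvdMonoid_of_isUnit_of_natDegree_eq_zero {R : Type*} [CommRing R]
    [NoZeroDivisors R] (S : Subring R[X])
    (hunit : ∀ f : S, f ≠ 0 → (f : R[X]).natDegree = 0 → IsUnit f) : WfDvdMonoid S := by
  classical
  -- `0` is sent to `⊤` since every element divides it.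
  let size : S → WithTop ℕ := fun f => if (f : R[X]) = 0 then ⊤ else (f : R[X]).natDegree
  refine ⟨Subrelation.wf ?_ (InvImage.wf size wellFounded_lt)⟩
  rintro a b ⟨ha, c, hc, rfl⟩
  have ha' : (a : R[X]) ≠ 0 := fun ha0 => ha (Subtype.ext ha0)
  simp only [InvImage, size, if_neg ha', Subring.coe_mul]
  split_ifs with hac
  · exact WithTop.coe_lt_top _
  have hc' : (c : R[X]) ≠ 0 := right_ne_zero_of_mul hac
  have hdeg : (c : R[X]).natDegree ≠ 0 := fun h0 =>
    hc (hunit c (fun hc0 => hc' (by simp [hc0])) h0)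
  rw [natDegree_mul ha' hc']
  exact_mod_cast Nat.lt_add_of_pos_right (Nat.pos_of_ne_zero hdeg)

theorem C_mem_compositeChain_iff {B : Type*} [CommRing B] {n : ℕ} (hn : 0 < n)
    {A : ℕ → Subring B} {hA : Monotone A} {c : B} :
    C c ∈ compositeChain n A hA ↔ c ∈ A 0 := by
  refine ⟨fun h => by simpa using h 0 hn, fun h i _ => ?_⟩
  rcases i with _ | i
  · simpa using h
  · simp [coeff_C_succ, zero_mem]

theorem isUnit_of_natDegree_eq_zero_of_mem_compositeChain {B : Type*} [Field B] {n : ℕ}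
    (hn : 0 < n) {A : ℕ → Subfield B} (hA : Monotone A)
    (f : compositeChain n (fun i => (A i).toSubring) (fun _ _ h _ hx => hA h hx)) (hf : f ≠ 0)
    (hdeg : (f : B[X]).natDegree = 0) : IsUnit f := by
  obtain ⟨c, hc⟩ := natDegree_eq_zero.mp hdeg
  have hc0 : c ≠ 0 := by
    rintro rfl
    exact hf (Subtype.ext (by simp [← hc]))
  have hcA : c ∈ A 0 := (C_mem_compositeChain_iff hn).mp (hc ▸ f.2)
  have hinv : C c⁻¹ ∈ compositeChain n (fun i => (A i).toSubring) (fun _ _ h _ hx => hA h hx) :=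
    (C_mem_compositeChain_iff hn).mpr ((A 0).inv_mem hcA)
  refine isUnit_iff_exists_inv.mpr ⟨⟨C c⁻¹, hinv⟩, Subtype.ext ?_⟩
  simp [← hc, ← C_mul, hc0]

/-- For a chain of fields `A_0 ⊆ … ⊆ A_{n-1} ⊆ B`,
`T_n = A_0 + A_1·X + … + A_{n-1}·X^{n-1} + X^n·B[X]` is atomic: every nonzero nonunit of
`T_n` is a finite product of irreducible elements of `T_n`. -/
theorem compositeChain_atomic {B : Type*} [Field B]
    (n : ℕ) (hn : 0 < n) (A : ℕ → Subfield B) (hA : Monotone A) :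
    ∀ g : compositeChain n (fun i => (A i).toSubring) (fun _ _ h _ hx => hA h hx),
      g ≠ 0 → ¬IsUnit g →
        ∃ l : Multiset (compositeChain n (fun i => (A i).toSubring)
            (fun _ _ h _ hx => hA h hx)),
          (∀ b ∈ l, Irreducible b) ∧ l.prod = g := by
  intro g hg hu
  have := Subring.wfDvdMonoid_of_isUnit_of_natDegree_eq_zero _
    (isUnit_of_natDegree_eq_zero_of_mem_compositeChain hn hA)
  obtain ⟨l, hl, hprod, -⟩ := (WfDvdMonoid.not_isUnit_iff_exists_factors_eq g hg).mp hu
  exact ⟨l, hl, hprod⟩
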